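/- Let [t₀, t₁) ⊂ ℝ and let v, v₀ : [t₀,t₁) → ℝ be measurable locally bounded functions, φ ∈ L¹([t₀,t₁); ℝ) with φ ≥ 0. If v(t) ≥ v₀(t) + ∫_{t₀}^t φ(s) v(s) ds for almost all t ∈ [t₀,t₁), then v(t) ≥ v₀(t) + ∫_{t₀}^t v₀(s) φ(s) exp(∫_s^t φ(r) dr) ds for almost all t ∈ [t₀,t₁). -/

import Mathlib

open MeasureTheory Real intervalIntegral

section GronwallAux
open Set

lemma exp_neg_lip {x y : ℝ} (hx : 0 ≤ x) (hy : 0 ≤ y) :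
    |Real.exp (-x) - Real.exp (-y)| ≤ |x - y| := by
  rcases le_total x y with h | h
  · have h1 : Real.exp (-x) ≤ 1 := Real.exp_le_one_iff.mpr (by linarith)
    have h2 : Real.exp (-y) ≤ Real.exp (-x) := Real.exp_le_exp.mpr (by linarith)
    have h3 : (x - y) + 1 ≤ Real.exp (x - y) := Real.add_one_le_exp _
    have h4 : Real.exp (-y) = Real.exp (-x) * Real.exp (x - y) := by
      rw [← Real.exp_add]; ring_nf
    rw [abs_of_nonneg (by linarith), abs_of_nonpos (by linarith)]
    nlinarith [Real.exp_pos (-x)]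
  · have h1 : Real.exp (-y) ≤ 1 := Real.exp_le_one_iff.mpr (by linarith)
    have h2 : Real.exp (-x) ≤ Real.exp (-y) := Real.exp_le_exp.mpr (by linarith)
    have h3 : (y - x) + 1 ≤ Real.exp (y - x) := Real.add_one_le_exp _
    have h4 : Real.exp (-x) = Real.exp (-y) * Real.exp (y - x) := by
      rw [← Real.exp_add]; ring_nf
    rw [abs_of_nonpos (by linarith), abs_of_nonneg (by linarith)]
    nlinarith [Real.exp_pos (-y)]

lemma cont_key (a b : ℝ) (ψ : ℝ → ℝ) (hψ : Continuous ψ) :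
    ∫ s in a..b, ψ s * Real.exp (-∫ r in a..s, ψ r)
      = 1 - Real.exp (-∫ r in a..b, ψ r) := by
  have hint : ∀ x y : ℝ, IntervalIntegrable ψ volume x y := fun x y => hψ.intervalIntegrable x y
  have hΨ : ∀ x : ℝ, HasDerivAt (fun u => ∫ r in a..u, ψ r) (ψ x) x := fun x =>
    intervalIntegral.integral_hasDerivAt_right (hint a x)
      (hψ.stronglyMeasurableAtFilter _ _) hψ.continuousAt
  have hF : ∀ x ∈ Set.uIcc a b, HasDerivAt (fun u => 1 - Real.exp (-∫ r in a..u, ψ r))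
      (ψ x * Real.exp (-∫ r in a..x, ψ r)) x := by
    intro x _
    have h1 : HasDerivAt (fun u => -∫ r in a..u, ψ r) (-ψ x) x := (hΨ x).neg
    have h2 := (Real.hasDerivAt_exp (-∫ r in a..x, ψ r)).comp x h1
    have h3 := (hasDerivAt_const x (1:ℝ)).sub h2
    refine h3.congr_deriv ?_
    ring
  have hcont : Continuous fun x => ψ x * Real.exp (-∫ r in a..x, ψ r) :=
    hψ.mul (Real.continuous_exp.comp (intervalIntegral.continuous_primitive hint a).neg)
  rw [intervalIntegral.integral_eq_sub_of_hasDerivAt hF (hcont.intervalIntegrable _ _)]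
  simp

lemma key (a b : ℝ) (hab : a ≤ b) (φ : ℝ → ℝ) (hm : Measurable φ)
    (h0 : ∀ s, 0 ≤ φ s) (hint : Integrable φ) :
    ∫ s in a..b, φ s * Real.exp (-∫ r in a..s, φ r)
      = 1 - Real.exp (-∫ r in a..b, φ r) := by
  set I : ℝ := ∫ x, |φ x| with hI
  have hI0 : 0 ≤ I := integral_nonneg fun x => abs_nonneg _
  set L : ℝ := ∫ s in a..b, φ s * Real.exp (-∫ r in a..s, φ r) with hL
  set R : ℝ := 1 - Real.exp (-∫ r in a..b, φ r) with hR
  suffices h : ∀ ε : ℝ, 0 < ε → |L - R| ≤ ε * (2 + I + ε) by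
    by_contra hne
    have hd : 0 < |L - R| := abs_pos.mpr (sub_ne_zero.mpr hne)
    set d := |L - R|
    have hε : 0 < min 1 (d / (2 * (3 + I))) := by positivity
    have hkey := h _ hε
    set m := min 1 (d / (2 * (3 + I))) with hm
    have h1 : m ≤ 1 := min_le_left _ _
    have h2 : m ≤ d / (2 * (3 + I)) := min_le_right _ _
    have h3 : m * (2 + I + m) ≤ m * (3 + I) := by nlinarith
    have h4 : m * (3 + I) ≤ (d / (2 * (3 + I))) * (3 + I) :=
      mul_le_mul_of_nonneg_right h2 (by linarith)
    have h5 : (d / (2 * (3 + I))) * (3 + I) = d / 2 := by field_simp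
    linarith
  intro ε hε
  obtain ⟨g, -, hgL1, hgcont, hgint⟩ := hint.exists_hasCompactSupport_integral_sub_le hε
  set ψ : ℝ → ℝ := fun x => max (g x) 0 with hψdef
  have hψcont : Continuous ψ := hgcont.max continuous_const
  have hψ0 : ∀ x, 0 ≤ ψ x := fun x => le_max_right _ _
  have hψint : Integrable ψ := hgint.pos_part
  have hpt : ∀ x, |φ x - ψ x| ≤ |φ x - g x| := by
    intro x
    rcases le_or_gt 0 (g x) with h | h
    · simp [hψdef, max_eq_left h]
    · have : ψ x = 0 := max_eq_right h.le
      rw [this, sub_zero, abs_of_nonneg (h0 x), abs_of_nonneg (by linarith [h0 x])]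
      linarith
  set δ : ℝ := ∫ x, |φ x - ψ x| with hδdef
  have hδ0 : 0 ≤ δ := integral_nonneg fun x => abs_nonneg _
  have hsubint : Integrable (fun x => |φ x - ψ x|) := (hint.sub hψint).abs
  have hδε : δ ≤ ε := by
    calc δ ≤ ∫ x, |φ x - g x| := integral_mono hsubint (hint.sub hgint).abs hpt
    _ ≤ ε := by simpa [Real.norm_eq_abs] using hgL1
  -- primitives
  set Φ : ℝ → ℝ := fun s => ∫ r in a..s, φ r with hΦdef
  set Ψ : ℝ → ℝ := fun s => ∫ r in a..s, ψ r with hΨdef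
  have hΦcont : Continuous Φ := hint.continuous_primitive a
  have hΨcont : Continuous Ψ := hψint.continuous_primitive a
  have hΦ0 : ∀ s, a ≤ s → 0 ≤ Φ s := fun s hs =>
    intervalIntegral.integral_nonneg hs fun u _ => h0 u
  have hΨ0 : ∀ s, a ≤ s → 0 ≤ Ψ s := fun s hs =>
    intervalIntegral.integral_nonneg hs fun u _ => hψ0 u
  have hΦΨ : ∀ s, a ≤ s → |Φ s - Ψ s| ≤ δ := by
    intro s hs
    rw [hΦdef, hΨdef]
    simp only
    rw [← intervalIntegral.integral_sub hint.intervalIntegrable hψint.intervalIntegrable]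
    calc |∫ r in a..s, (φ r - ψ r)| ≤ ∫ r in a..s, |φ r - ψ r| := by
          simpa [Real.norm_eq_abs] using
            intervalIntegral.norm_integral_le_integral_norm (f := fun r => φ r - ψ r) hs
    _ = ∫ r in Ioc a s, |φ r - ψ r| := intervalIntegral.integral_of_le hs
    _ ≤ δ := setIntegral_le_integral hsubint (Filter.Eventually.of_forall fun x => abs_nonneg _)
  -- integrands
  set fφ : ℝ → ℝ := fun s => φ s * Real.exp (-Φ s) with hfφ
  set fψ : ℝ → ℝ := fun s => ψ s * Real.exp (-Ψ s) with hfψ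
  have hfφm : Measurable fφ := hm.mul (Real.continuous_exp.comp hΦcont.neg).measurable
  have hfφint : IntervalIntegrable fφ volume a b := by
    rw [intervalIntegrable_iff_integrableOn_Ioc_of_le hab]
    apply Integrable.mono' (hint.abs.integrableOn) hfφm.aestronglyMeasurable
    filter_upwards [ae_restrict_mem measurableSet_Ioc] with s hs
    have h1 : Real.exp (-Φ s) ≤ 1 := Real.exp_le_one_iff.mpr (by linarith [hΦ0 s hs.1.le])
    calc ‖fφ s‖ = |φ s| * Real.exp (-Φ s) := by
          rw [Real.norm_eq_abs, hfφ]; simp [abs_mul, abs_of_pos (Real.exp_pos _)]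
    _ ≤ |φ s| * 1 := mul_le_mul_of_nonneg_left h1 (abs_nonneg _)
    _ = |φ s| := mul_one _
  have hfψint : IntervalIntegrable fψ volume a b :=
    (hψcont.mul (Real.continuous_exp.comp hΨcont.neg)).intervalIntegrable a b
  -- main estimate
  have hLψ : ∫ s in a..b, fψ s = 1 - Real.exp (-Ψ b) := cont_key a b ψ hψcont
  have hψb : ∫ x in a..b, ψ x ≤ δ + I := by
    calc ∫ x in a..b, ψ x = ∫ x in Ioc a b, ψ x := intervalIntegral.integral_of_le hab
    _ ≤ ∫ x, ψ x := setIntegral_le_integral hψint (Filter.Eventually.of_forall fun x => hψ0 x)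
    _ ≤ ∫ x, (|φ x - ψ x| + |φ x|) := by
        apply integral_mono hψint (hsubint.add hint.abs)
        intro x
        calc ψ x = |ψ x| := (abs_of_nonneg (hψ0 x)).symm
        _ ≤ |φ x - ψ x| + |φ x| := by
            have := abs_sub_abs_le_abs_sub (ψ x) (φ x)
            have := abs_sub_comm (φ x) (ψ x)
            linarith [abs_sub_abs_le_abs_sub (ψ x) (φ x), (abs_sub_comm (ψ x) (φ x))]
    _ = δ + I := integral_add hsubint hint.abs
  have step1 : |(∫ s in a..b, fφ s) - ∫ s in a..b, fψ s| ≤ δ + (δ + I) * δ := by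
    rw [← intervalIntegral.integral_sub hfφint hfψint]
    calc |∫ s in a..b, (fφ s - fψ s)| ≤ ∫ s in a..b, |fφ s - fψ s| := by
          simpa [Real.norm_eq_abs] using
            intervalIntegral.norm_integral_le_integral_norm (f := fun s => fφ s - fψ s) hab
    _ ≤ ∫ s in a..b, (|φ s - ψ s| + ψ s * δ) := by
        apply intervalIntegral.integral_mono_on hab ((hfφint.sub hfψint).abs)
          (hsubint.intervalIntegrable.add (hψint.intervalIntegrable.mul_const δ))
        intro s hs
        have e1 : Real.exp (-Φ s) ≤ 1 := Real.exp_le_one_iff.mpr (by linarith [hΦ0 s hs.1])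
        have e2 : |Real.exp (-Φ s) - Real.exp (-Ψ s)| ≤ δ :=
          le_trans (exp_neg_lip (hΦ0 s hs.1) (hΨ0 s hs.1)) (hΦΨ s hs.1)
        have : fφ s - fψ s
            = (φ s - ψ s) * Real.exp (-Φ s) + ψ s * (Real.exp (-Φ s) - Real.exp (-Ψ s)) := by
          rw [hfφ, hfψ]; ring
        rw [this]
        calc |(φ s - ψ s) * Real.exp (-Φ s) + ψ s * (Real.exp (-Φ s) - Real.exp (-Ψ s))|
            ≤ |φ s - ψ s| * Real.exp (-Φ s) + ψ s * |Real.exp (-Φ s) - Real.exp (-Ψ s)| := by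
              refine le_trans (abs_add_le _ _) ?_
              rw [abs_mul, abs_mul, abs_of_pos (Real.exp_pos _), abs_of_nonneg (hψ0 s)]
        _ ≤ |φ s - ψ s| * 1 + ψ s * δ := by gcongr
        _ = |φ s - ψ s| + ψ s * δ := by ring
    _ = (∫ s in a..b, |φ s - ψ s|) + (∫ s in a..b, ψ s) * δ := by
        rw [intervalIntegral.integral_add hsubint.intervalIntegrable
          (hψint.intervalIntegrable.mul_const δ), intervalIntegral.integral_mul_const]
    _ ≤ δ + (δ + I) * δ := by
        have h6 : ∫ s in a..b, |φ s - ψ s| ≤ δ := by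
          calc ∫ s in a..b, |φ s - ψ s| = ∫ s in Ioc a b, |φ s - ψ s| :=
                intervalIntegral.integral_of_le hab
          _ ≤ δ := setIntegral_le_integral hsubint
                (Filter.Eventually.of_forall fun x => abs_nonneg _)
        have h7 : (∫ s in a..b, ψ s) * δ ≤ (δ + I) * δ :=
          mul_le_mul_of_nonneg_right hψb hδ0
        linarith
  have step2 : |(1 - Real.exp (-Ψ b)) - R| ≤ δ := by
    rw [hR]
    have : (1 - Real.exp (-Ψ b)) - (1 - Real.exp (-Φ b)) = Real.exp (-Φ b) - Real.exp (-Ψ b) := by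
      ring
    rw [this]
    exact le_trans (exp_neg_lip (hΦ0 b hab) (hΨ0 b hab)) (hΦΨ b hab)
  have hfinal : |L - R| ≤ (δ + (δ + I) * δ) + δ := by
    rw [hL]
    calc |(∫ s in a..b, fφ s) - R|
        ≤ |(∫ s in a..b, fφ s) - ∫ s in a..b, fψ s| + |(∫ s in a..b, fψ s) - R| :=
          abs_sub_le _ _ _
    _ ≤ (δ + (δ + I) * δ) + δ := add_le_add step1 (by rw [hLψ]; exact step2)
  nlinarith [hfinal, hδε, hδ0, hI0, hε.le]

end GronwallAux

section Main
open Set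

theorem stmt_19 (t₀ t₁ : ℝ) (ht : t₀ < t₁) (v v₀ φ : ℝ → ℝ)
    (hv : Measurable v) (hv₀ : Measurable v₀)
    (hvb : ∀ b ∈ Set.Ico t₀ t₁, ∃ C : ℝ, ∀ s ∈ Set.Icc t₀ b, |v s| ≤ C)
    (hv₀b : ∀ b ∈ Set.Ico t₀ t₁, ∃ C : ℝ, ∀ s ∈ Set.Icc t₀ b, |v₀ s| ≤ C)
    (hφ : IntegrableOn φ (Set.Ico t₀ t₁))
    (hφm : Measurable φ) (hφ0 : ∀ s, 0 ≤ φ s)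
    (hyp : ∀ᵐ t ∂(volume.restrict (Set.Ico t₀ t₁)),
      v₀ t + ∫ s in t₀..t, φ s * v s ≤ v t) :
    ∀ᵐ t ∂(volume.restrict (Set.Ico t₀ t₁)),
      v₀ t + ∫ s in t₀..t, v₀ s * φ s * Real.exp (∫ r in s..t, φ r) ≤ v t := by
  have hyp' : ∀ᵐ t ∂volume, t ∈ Set.Ico t₀ t₁ →
      v₀ t + ∫ s in t₀..t, φ s * v s ≤ v t :=
    (ae_restrict_iff' measurableSet_Ico).mp hyp
  rw [ae_restrict_iff' measurableSet_Ico]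
  filter_upwards [hyp'] with t hPt htmem
  obtain ⟨ht₀t, htt₁⟩ := htmem
  have hP : v₀ t + ∫ s in t₀..t, φ s * v s ≤ v t := hPt ⟨ht₀t, htt₁⟩
  obtain ⟨Cv, hCv⟩ := hvb t ⟨ht₀t, htt₁⟩
  obtain ⟨Cv₀, hCv₀⟩ := hv₀b t ⟨ht₀t, htt₁⟩
  have hsub : Set.Icc t₀ t ⊆ Set.Ico t₀ t₁ := fun x hx => ⟨hx.1, lt_of_le_of_lt hx.2 htt₁⟩
  -- the globally integrable truncation of φ
  set φ' : ℝ → ℝ := (Set.Icc t₀ t).indicator φ with hφ'def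
  have hφ'm : Measurable φ' := hφm.indicator measurableSet_Icc
  have hφ'0 : ∀ s, 0 ≤ φ' s := fun s => Set.indicator_nonneg (fun x _ => hφ0 x) s
  have hφ'int : Integrable φ' := (hφ.mono_set hsub).integrable_indicator measurableSet_Icc
  have hφ'eq : ∀ s ∈ Set.Icc t₀ t, φ' s = φ s := fun s hs => Set.indicator_of_mem hs φ
  -- the primitive
  set Φ : ℝ → ℝ := fun s => ∫ r in t₀..s, φ' r with hΦdef
  have hΦcont : Continuous Φ := hφ'int.continuous_primitive t₀
  have hΦ0 : ∀ s, t₀ ≤ s → 0 ≤ Φ s := fun s hs =>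
    intervalIntegral.integral_nonneg hs fun u _ => hφ'0 u
  have hΦadd : ∀ r : ℝ, Φ r + ∫ u in r..t, φ' u = Φ t := fun r =>
    intervalIntegral.integral_add_adjacent_intervals hφ'int.intervalIntegrable
      hφ'int.intervalIntegrable
  have hΦadd' : ∀ r s : ℝ, Φ r + ∫ u in r..s, φ' u = Φ s := fun r s =>
    intervalIntegral.integral_add_adjacent_intervals hφ'int.intervalIntegrable
      hφ'int.intervalIntegrable
  set A : Set ℝ := Set.Ioc t₀ t with hAdef
  set g : ℝ → ℝ := fun r => φ' r * v r with hgdef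
  have hgm : Measurable g := hφ'm.mul hv
  have hgint : Integrable g := by
    apply (hφ'int.mul_const Cv).mono' (hgm.aestronglyMeasurable)
    apply Filter.Eventually.of_forall
    intro s
    rw [Real.norm_eq_abs, hgdef]
    simp only [abs_mul]
    rw [abs_of_nonneg (hφ'0 s)]
    by_cases hs : s ∈ Set.Icc t₀ t
    · exact mul_le_mul_of_nonneg_left (hCv s hs) (hφ'0 s)
    · have : φ' s = 0 := Set.indicator_of_notMem hs φ
      simp [this]
  set f : ℝ → ℝ := fun s => φ' s * Real.exp (-Φ s) with hfdef
  have hfm : Measurable f := hφ'm.mul (Real.continuous_exp.comp hΦcont.neg).measurable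
  have hf0 : ∀ s, 0 ≤ f s := fun s => mul_nonneg (hφ'0 s) (Real.exp_pos _).le
  have hfle : ∀ s, t₀ ≤ s → f s ≤ φ' s := by
    intro s hs
    have h1 : Real.exp (-Φ s) ≤ 1 := Real.exp_le_one_iff.mpr (by linarith [hΦ0 s hs])
    calc f s ≤ φ' s * 1 := mul_le_mul_of_nonneg_left h1 (hφ'0 s)
    _ = φ' s := mul_one _
  have hfint : IntegrableOn f A := by
    apply (hφ'int.integrableOn).mono' hfm.aestronglyMeasurable
    filter_upwards [ae_restrict_mem measurableSet_Ioc] with s hs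
    rw [Real.norm_eq_abs, abs_of_nonneg (hf0 s)]
    exact hfle s hs.1.le
  -- the inner primitive w
  set w : ℝ → ℝ := fun s => ∫ r in t₀..s, g r with hwdef
  have hwcont : Continuous w := hgint.continuous_primitive t₀
  obtain ⟨Cw, hCw⟩ := isCompact_Icc.exists_bound_of_continuousOn
    (s := Set.Icc t₀ t) hwcont.continuousOn
  have hwA : ∀ s ∈ Set.Icc t₀ t, w s = ∫ r in Set.Ioc t₀ s, g r := fun s hs =>
    intervalIntegral.integral_of_le hs.1
  -- integral over the interval as set integral
  -- Fubini
  set T : Set (ℝ × ℝ) := {q : ℝ × ℝ | q.2 ≤ q.1} with hTdef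
  have hT : MeasurableSet T := measurableSet_le measurable_snd measurable_fst
  set F : ℝ × ℝ → ℝ := T.indicator (fun q => f q.1 * g q.2) with hFdef
  have hFm : Measurable F := ((hfm.comp measurable_fst).mul (hgm.comp measurable_snd)).indicator hT
  set μA : Measure ℝ := volume.restrict A with hμA
  have hFint : Integrable F (μA.prod μA) := by
    apply (Integrable.mul_prod (hfint.abs) (hgint.abs.integrableOn)).mono'
      hFm.aestronglyMeasurable
    apply Filter.Eventually.of_forall
    intro p
    rw [Real.norm_eq_abs]
    by_cases hp : p ∈ T
    · rw [hFdef, Set.indicator_of_mem hp]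
      rw [abs_mul]
    · rw [hFdef, Set.indicator_of_notMem hp, abs_zero]
      positivity
  have hswap := MeasureTheory.integral_integral_swap (μ := μA) (ν := μA)
    (f := fun s r => F (s, r)) hFint
  -- left side
  have hleft : (∫ s, (∫ r, F (s, r) ∂μA) ∂μA) = ∫ s in A, f s * w s := by
    apply setIntegral_congr_fun measurableSet_Ioc
    intro s hs
    have h1 : ∀ r, F (s, r) = (Set.Iic s).indicator (fun r => f s * g r) r := by
      intro r
      by_cases hr : r ≤ s
      · rw [hFdef, Set.indicator_of_mem (by exact hr : (s, r) ∈ T),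
          Set.indicator_of_mem (by exact hr)]
      · rw [hFdef, Set.indicator_of_notMem (by exact hr : ¬ (s, r) ∈ T),
          Set.indicator_of_notMem (by exact hr)]
    simp only [h1]
    rw [hμA, setIntegral_indicator measurableSet_Iic]
    have h2 : A ∩ Set.Iic s = Set.Ioc t₀ s := by
      rw [hAdef]
      ext r
      simp only [Set.mem_inter_iff, Set.mem_Ioc, Set.mem_Iic]
      constructor
      · rintro ⟨⟨h3, _⟩, h5⟩; exact ⟨h3, h5⟩
      · rintro ⟨h3, h4⟩; exact ⟨⟨h3, h4.trans hs.2⟩, h4⟩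
    rw [h2, MeasureTheory.integral_const_mul, ← hwA s ⟨hs.1.le, hs.2⟩]
  -- right side
  have hIrt : ∀ r, t₀ ≤ r → r ≤ t →
      (∫ s in r..t, f s) = Real.exp (-Φ r) - Real.exp (-Φ t) := by
    intro r hr1 hr2
    have hcongr : ∀ s ∈ Set.uIcc r t, f s
        = Real.exp (-Φ r) * (φ' s * Real.exp (-∫ u in r..s, φ' u)) := by
      intro s _
      have h3 : Φ s = Φ r + ∫ u in r..s, φ' u := (hΦadd' r s).symm
      rw [hfdef]
      simp only
      rw [h3, neg_add, Real.exp_add]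
      ring
    rw [intervalIntegral.integral_congr hcongr, intervalIntegral.integral_const_mul,
      key r t hr2 φ' hφ'm hφ'0 hφ'int]
    have h4 : Φ t = Φ r + ∫ u in r..t, φ' u := (hΦadd r).symm
    rw [h4, neg_add, Real.exp_add]
    ring
  have hright : (∫ r, (∫ s, F (s, r) ∂μA) ∂μA)
      = ∫ r in A, g r * (Real.exp (-Φ r) - Real.exp (-Φ t)) := by
    apply setIntegral_congr_fun measurableSet_Ioc
    intro r hr
    have h1 : ∀ s, F (s, r) = (Set.Ici r).indicator (fun s => f s * g r) s := by
      intro s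
      by_cases hsr : r ≤ s
      · rw [hFdef, Set.indicator_of_mem (by exact hsr : (s, r) ∈ T),
          Set.indicator_of_mem (by exact hsr)]
      · rw [hFdef, Set.indicator_of_notMem (by exact hsr : ¬ (s, r) ∈ T),
          Set.indicator_of_notMem (by exact hsr)]
    simp only [h1]
    rw [hμA, setIntegral_indicator measurableSet_Ici]
    have h2 : A ∩ Set.Ici r = Set.Icc r t := by
      rw [hAdef]
      ext s
      simp only [Set.mem_inter_iff, Set.mem_Ioc, Set.mem_Icc, Set.mem_Ici]
      constructor
      · rintro ⟨⟨_, h4⟩, h5⟩; exact ⟨h5, h4⟩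
      · rintro ⟨h3, h4⟩; exact ⟨⟨lt_of_lt_of_le hr.1 h3, h4⟩, h3⟩
    rw [h2, MeasureTheory.integral_mul_const, integral_Icc_eq_integral_Ioc,
      ← intervalIntegral.integral_of_le hr.2, hIrt r hr.1.le hr.2]
    ring
  -- key identity
  have hgeint : IntegrableOn (fun r => g r * Real.exp (-Φ r)) A := by
    apply (hgint.abs.integrableOn).mono'
      ((hgm.mul (Real.continuous_exp.comp hΦcont.neg).measurable).aestronglyMeasurable)
    filter_upwards [ae_restrict_mem measurableSet_Ioc] with s hs
    have h1 : Real.exp (-Φ s) ≤ 1 := Real.exp_le_one_iff.mpr (by linarith [hΦ0 s hs.1.le])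
    simp only [Pi.mul_apply, Pi.neg_apply, Function.comp_apply, Real.norm_eq_abs, abs_mul, abs_of_pos (Real.exp_pos (-Φ s))]
    calc |g s| * Real.exp (-Φ s) ≤ |g s| * 1 := mul_le_mul_of_nonneg_left h1 (abs_nonneg _)
    _ = |g s| := mul_one _
  have hfwint : IntegrableOn (fun s => f s * w s) A := by
    apply ((hφ'int.mul_const Cw).integrableOn).mono'
      ((hfm.mul hwcont.measurable).aestronglyMeasurable)
    filter_upwards [ae_restrict_mem measurableSet_Ioc] with s hs
    rw [Real.norm_eq_abs, Pi.mul_apply, abs_mul, abs_of_nonneg (hf0 s)]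
    have h2 : |w s| ≤ Cw := by
      have := hCw s ⟨hs.1.le, hs.2⟩
      rwa [Real.norm_eq_abs] at this
    calc f s * |w s| ≤ φ' s * |w s| := mul_le_mul_of_nonneg_right (hfle s hs.1.le) (abs_nonneg _)
    _ ≤ φ' s * Cw := mul_le_mul_of_nonneg_left h2 (hφ'0 s)
  have hwt : w t = ∫ r in A, g r := hwA t ⟨ht₀t, le_refl t⟩
  have hmain : Real.exp (-Φ t) * w t
      = ∫ s in A, φ' s * (v s - w s) * Real.exp (-Φ s) := by
    have e1 : (∫ r in A, g r * (Real.exp (-Φ r) - Real.exp (-Φ t)))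
        = (∫ r in A, g r * Real.exp (-Φ r)) - Real.exp (-Φ t) * w t := by
      have : (fun r => g r * (Real.exp (-Φ r) - Real.exp (-Φ t)))
          = fun r => g r * Real.exp (-Φ r) - Real.exp (-Φ t) * g r := by
        funext r; ring
      rw [this, integral_sub hgeint ((hgint.integrableOn).const_mul _),
        MeasureTheory.integral_const_mul, hwt]
    have e2 : (∫ s in A, φ' s * (v s - w s) * Real.exp (-Φ s))
        = (∫ s in A, g s * Real.exp (-Φ s)) - ∫ s in A, f s * w s := by
      rw [← integral_sub hgeint hfwint]
      apply setIntegral_congr_fun measurableSet_Ioc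
      intro s _
      rw [hgdef, hfdef]
      simp only
      ring
    have e3 : (∫ s in A, f s * w s)
        = (∫ r in A, g r * Real.exp (-Φ r)) - Real.exp (-Φ t) * w t := by
      rw [← e1, ← hright, ← hswap, hleft]
    rw [e2, e3]
    ring
  -- lower bound the integrand a.e.
  have hv₀eint : IntegrableOn (fun s => φ' s * v₀ s * Real.exp (-Φ s)) A := by
    apply ((hφ'int.mul_const Cv₀).integrableOn).mono'
      (((hφ'm.mul hv₀).mul (Real.continuous_exp.comp hΦcont.neg).measurable).aestronglyMeasurable)
    filter_upwards [ae_restrict_mem measurableSet_Ioc] with s hs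
    have h1 : Real.exp (-Φ s) ≤ 1 := Real.exp_le_one_iff.mpr (by linarith [hΦ0 s hs.1.le])
    simp only [Pi.mul_apply, Pi.neg_apply, Function.comp_apply, Real.norm_eq_abs, abs_mul, abs_of_nonneg (hφ'0 s),
      abs_of_pos (Real.exp_pos (-Φ s))]
    have h2 : |v₀ s| ≤ Cv₀ := hCv₀ s ⟨hs.1.le, hs.2⟩
    calc φ' s * |v₀ s| * Real.exp (-Φ s) ≤ φ' s * |v₀ s| * 1 :=
          mul_le_mul_of_nonneg_left h1 (mul_nonneg (hφ'0 s) (abs_nonneg _))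
    _ = φ' s * |v₀ s| := mul_one _
    _ ≤ φ' s * Cv₀ := mul_le_mul_of_nonneg_left h2 (hφ'0 s)
  have hint2 : IntegrableOn (fun s => φ' s * (v s - w s) * Real.exp (-Φ s)) A := by
    have : (fun s => φ' s * (v s - w s) * Real.exp (-Φ s))
        = fun s => g s * Real.exp (-Φ s) - f s * w s := by
      funext s; rw [hgdef, hfdef]; simp only; ring
    rw [this]
    exact hgeint.sub hfwint
  have hwφ : ∀ s ∈ Set.Icc t₀ t, w s = ∫ u in t₀..s, φ u * v u := by
    intro s hs
    rw [hwdef]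
    apply intervalIntegral.integral_congr
    intro u hu
    have hu' : u ∈ Set.Icc t₀ t := by
      rw [Set.uIcc_of_le hs.1] at hu
      exact ⟨hu.1, hu.2.trans hs.2⟩
    rw [hgdef]
    simp only
    rw [hφ'eq u hu']
  have hae : ∀ᵐ s ∂μA, φ' s * v₀ s * Real.exp (-Φ s)
      ≤ φ' s * (v s - w s) * Real.exp (-Φ s) := by
    rw [hμA]
    filter_upwards [ae_restrict_of_ae hyp', ae_restrict_mem measurableSet_Ioc] with s hPs hsA
    have hs' : s ∈ Set.Icc t₀ t := ⟨hsA.1.le, hsA.2⟩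
    have hPss := hPs ⟨hs'.1, lt_of_le_of_lt hs'.2 htt₁⟩
    rw [← hwφ s hs'] at hPss
    have h5 : v₀ s ≤ v s - w s := by linarith
    exact mul_le_mul_of_nonneg_right
      (mul_le_mul_of_nonneg_left h5 (hφ'0 s)) (Real.exp_pos (-Φ s)).le
  have hlow : (∫ s in A, φ' s * v₀ s * Real.exp (-Φ s)) ≤ Real.exp (-Φ t) * w t := by
    rw [hmain]
    exact integral_mono_ae hv₀eint hint2 hae
  -- conclude
  have htarget : (∫ s in t₀..t, v₀ s * φ s * Real.exp (∫ r in s..t, φ r))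
      = Real.exp (Φ t) * ∫ s in A, φ' s * v₀ s * Real.exp (-Φ s) := by
    rw [intervalIntegral.integral_of_le ht₀t, ← MeasureTheory.integral_const_mul]
    apply setIntegral_congr_fun measurableSet_Ioc
    intro s hs
    have hs' : s ∈ Set.Icc t₀ t := ⟨hs.1.le, hs.2⟩
    have h1 : (∫ r in s..t, φ r) = ∫ r in s..t, φ' r := by
      apply intervalIntegral.integral_congr
      intro u hu
      have hu' : u ∈ Set.Icc t₀ t := by
        rw [Set.uIcc_of_le hs.2] at hu
        exact ⟨hs'.1.trans hu.1, hu.2⟩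
      rw [hφ'eq u hu']
    have h2 : (∫ r in s..t, φ' r) = Φ t - Φ s := by
      have := hΦadd s
      linarith
    show v₀ s * φ s * Real.exp (∫ r in s..t, φ r)
        = Real.exp (Φ t) * (φ' s * v₀ s * Real.exp (-Φ s))
    rw [h1, h2, hφ'eq s hs' ]
    rw [show Φ t - Φ s = Φ t + (-Φ s) by ring, Real.exp_add]
    ring
  have hfinal : (∫ s in t₀..t, v₀ s * φ s * Real.exp (∫ r in s..t, φ r)) ≤ w t := by
    rw [htarget]
    calc Real.exp (Φ t) * (∫ s in A, φ' s * v₀ s * Real.exp (-Φ s))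
        ≤ Real.exp (Φ t) * (Real.exp (-Φ t) * w t) :=
          mul_le_mul_of_nonneg_left hlow (Real.exp_pos _).le
    _ = (Real.exp (Φ t) * Real.exp (-Φ t)) * w t := by ring
    _ = w t := by rw [← Real.exp_add]; simp
  have hwt' : w t = (∫ s in t₀..t, φ s * v s) := hwφ t ⟨ht₀t, le_refl t⟩
  rw [hwt'] at hfinal
  linarith
end Main
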